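/- Define expectations in the mixed state T = Σ_m |c_m|² |φ_m⟩⟨φ_m| ⊗ |φ'_m⟩⟨φ'_m| by ⟨A⟩_T = Σ_m |c_m|² ⟨φ_m⊗φ'_m, A(φ_m⊗φ'_m)⟩ for bounded operators A on H⊗H'. Then for k ≠ l and α, β ∈ ℝ: ⟨P_{αkl}⊗1⟩_T = ⟨1⊗P'_{βkl}⟩_T = 0, ⟨P_{αkl}²⊗1⟩_T = ⟨1⊗P'_{βkl}²⟩_T = |c_k|² + |c_l|², and ⟨P_{αkl}⊗P'_{βkl}⟩_T = 0; hence the normalized correlation of P_{αkl} and P'_{βkl} in T vanishes whenever |c_k|² + |c_l|² > 0. On the other hand, ⟨P_k⊗1⟩_T = ⟨1⊗P'_k⟩_T = ⟨P_k⊗P'_k⟩_T = |c_k|², so ρ(P_k, P'_k, T) = 1 whenever 0 < |c_k| < 1. Thus passing from Φ to T preserves the correlations between P_k and P'_k but erases all correlations between P_{αkl} and P'_{βkl}. -/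

import Mathlib

/- STATEMENT 14.  In the mixed state T = Σ_m |c_m|² |φ_m⟩⟨φ_m| ⊗ |φ'_m⟩⟨φ'_m|,
with ⟨A⟩_T = Σ_m |c_m|² ⟨φ_m⊗φ'_m, A(φ_m⊗φ'_m)⟩: for k ≠ l,
⟨P_{αkl}⊗1⟩_T = ⟨1⊗P'_{βkl}⟩_T = 0, ⟨P_{αkl}²⊗1⟩_T = ⟨1⊗P'_{βkl}²⟩_T =
|c_k|²+|c_l|², ⟨P_{αkl}⊗P'_{βkl}⟩_T = 0, so ρ(P_{αkl},P'_{βkl},T) = 0 whenever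
|c_k|²+|c_l|² > 0; while ⟨P_k⊗1⟩_T = ⟨1⊗P'_k⟩_T = ⟨P_k⊗P'_k⟩_T = |c_k|², so
ρ(P_k,P'_k,T) = 1 whenever 0 < |c_k| < 1.  Passing from Φ to T preserves the
P_k–P'_k correlations but erases the P_{αkl}–P'_{βkl} correlations.
`HT` plays the role of the completed Hilbert tensor product `H ⊗ H'`;
`TOp O O'` is the operator `O ⊗ O'`. -/

open scoped InnerProductSpace ComplexConjugate

/-- |u⟩⟨v| : x ↦ ⟨v, x⟩ • u. -/
noncomputable def ketBra {E : Type*} [NormedAddCommGroup E] [InnerProductSpace ℂ E]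
    (u v : E) : E →L[ℂ] E :=
  ((innerSL ℂ) v).smulRight u

/-- P_{αkl} = e^{iα}|u⟩⟨v| + e^{−iα}|v⟩⟨u|. -/
noncomputable def offDiag {E : Type*} [NormedAddCommGroup E] [InnerProductSpace ℂ E]
    (α : ℝ) (u v : E) : E →L[ℂ] E :=
  Complex.exp (α * Complex.I) • ketBra u v + Complex.exp (-(α * Complex.I)) • ketBra v u

/-- Expectation ⟨A⟩_T = Σ_m |c_m|² ⟨u_m ⊗ u'_m, A (u_m ⊗ u'_m)⟩ in the mixed
state T = Σ_m |c_m|² |u_m⟩⟨u_m| ⊗ |u'_m⟩⟨u'_m|. -/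
noncomputable def expecT {H H' HT : Type*}
    [NormedAddCommGroup H] [InnerProductSpace ℂ H]
    [NormedAddCommGroup H'] [InnerProductSpace ℂ H']
    [NormedAddCommGroup HT] [InnerProductSpace ℂ HT]
    {ι : Type*} (tp : H →ₗ[ℂ] H' →ₗ[ℂ] HT) (u : ι → H) (u' : ι → H')
    (c : ι → ℂ) (A : HT →L[ℂ] HT) : ℂ :=
  ∑' m : ι, ((‖c m‖ ^ 2 : ℝ) : ℂ) * ⟪tp (u m) (u' m), A (tp (u m) (u' m))⟫_ℂ

/-- Variance Δ_T A = √(⟨A²⟩_T − ⟨A⟩_T²) in the mixed state T. -/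
noncomputable def DeltaT {H H' HT : Type*}
    [NormedAddCommGroup H] [InnerProductSpace ℂ H]
    [NormedAddCommGroup H'] [InnerProductSpace ℂ H']
    [NormedAddCommGroup HT] [InnerProductSpace ℂ HT]
    {ι : Type*} (tp : H →ₗ[ℂ] H' →ₗ[ℂ] HT) (u : ι → H) (u' : ι → H')
    (c : ι → ℂ) (A : HT →L[ℂ] HT) : ℝ :=
  Real.sqrt ((expecT tp u u' c (A.comp A)).re - ((expecT tp u u' c A).re) ^ 2)

/-- Normalized correlation in T of A = O⊗1 and B = 1⊗O', with C = O⊗O'. -/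
noncomputable def corrT {H H' HT : Type*}
    [NormedAddCommGroup H] [InnerProductSpace ℂ H]
    [NormedAddCommGroup H'] [InnerProductSpace ℂ H']
    [NormedAddCommGroup HT] [InnerProductSpace ℂ HT]
    {ι : Type*} (tp : H →ₗ[ℂ] H' →ₗ[ℂ] HT) (u : ι → H) (u' : ι → H')
    (c : ι → ℂ) (A B C : HT →L[ℂ] HT) : ℝ :=
  ((expecT tp u u' c C).re - (expecT tp u u' c A).re * (expecT tp u u' c B).re)
    / (DeltaT tp u u' c A * DeltaT tp u u' c B)

/-! The state `T` only sees the diagonal matrix elements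
`⟪φ_m ⊗ φ'_m, (O ⊗ O') (φ_m ⊗ φ'_m)⟫ = ⟪φ_m, O φ_m⟫ ⟪φ'_m, O' φ'_m⟫` in the product basis.
The off-diagonal operator `P_{αkl}` has vanishing diagonal, while `P_{αkl}² = P_k + P_l` and
`P_k² = P_k`, so each expectation is a sum of at most two weights `|c_m|²`: the covariance of
`P_{αkl} ⊗ 1` and `1 ⊗ P'_{βkl}` vanishes, and for `P_k` both the covariance and the variances
equal `|c_k|² - |c_k|⁴`. -/

section KetBra

variable {E : Type*} [NormedAddCommGroup E] [InnerProductSpace ℂ E]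

lemma ketBra_apply (u v x : E) : ketBra u v x = ⟪v, x⟫_ℂ • u := rfl

lemma ketBra_comp_ketBra (u v w x : E) :
    ketBra u v ∘L ketBra w x = ⟪v, w⟫_ℂ • ketBra u x := by
  ext y
  simp [ketBra_apply, smul_smul, mul_comm]

variable {ι : Type*} {u : ι → E}

lemma Orthonormal.inner_ketBra_self_apply [DecidableEq ι] (hu : Orthonormal ℂ u) (k m : ι) :
    ⟪u m, ketBra (u k) (u k) (u m)⟫_ℂ = if m = k then 1 else 0 := by
  by_cases h : m = k <;> simp [ketBra_apply, h, hu.inner_eq_zero, Ne.symm, hu.norm_eq_one]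

lemma Orthonormal.ketBra_self_comp_ketBra_self (hu : Orthonormal ℂ u) (k : ι) :
    ketBra (u k) (u k) ∘L ketBra (u k) (u k) = ketBra (u k) (u k) := by
  simp [ketBra_comp_ketBra, hu.norm_eq_one]

lemma Orthonormal.inner_offDiag_apply (hu : Orthonormal ℂ u) {k l : ι} (hkl : k ≠ l) (α : ℝ)
    (m : ι) : ⟪u m, offDiag α (u k) (u l) (u m)⟫_ℂ = 0 := by
  by_cases hk : m = k <;> by_cases hl : m = l <;>
    simp_all [offDiag, ketBra_apply, hu.inner_eq_zero, Ne.symm]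

lemma Orthonormal.offDiag_comp_offDiag (hu : Orthonormal ℂ u) {k l : ι} (hkl : k ≠ l) (α : ℝ) :
    offDiag α (u k) (u l) ∘L offDiag α (u k) (u l) = ketBra (u k) (u k) + ketBra (u l) (u l) := by
  simp [offDiag, ContinuousLinearMap.comp_add, ContinuousLinearMap.add_comp, ketBra_comp_ketBra,
    hu.inner_eq_zero hkl, hu.inner_eq_zero hkl.symm, hu.norm_eq_one, smul_smul, Complex.exp_neg,
    Complex.exp_ne_zero, add_comm]

end KetBra

section MixedState

variable {H H' HT ι : Type*}
  [NormedAddCommGroup H] [InnerProductSpace ℂ H]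
  [NormedAddCommGroup H'] [InnerProductSpace ℂ H']
  [NormedAddCommGroup HT] [InnerProductSpace ℂ HT]
  {tp : H →ₗ[ℂ] H' →ₗ[ℂ] HT} {u : ι → H} {u' : ι → H'} (c : ι → ℂ)

lemma expecT_eq_tsum_of_inner_eq {A : HT →L[ℂ] HT} {f : ι → ℂ}
    (hA : ∀ m, ⟪tp (u m) (u' m), A (tp (u m) (u' m))⟫_ℂ = f m) :
    expecT tp u u' c A = ∑' m, ((‖c m‖ ^ 2 : ℝ) : ℂ) * f m :=
  tsum_congr fun m => by rw [hA]

lemma expecT_eq_zero {A : HT →L[ℂ] HT}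
    (hA : ∀ m, ⟪tp (u m) (u' m), A (tp (u m) (u' m))⟫_ℂ = 0) :
    expecT tp u u' c A = 0 := by
  simp [expecT_eq_tsum_of_inner_eq c hA]

lemma expecT_eq_norm_sq [DecidableEq ι] {A : HT →L[ℂ] HT} {k : ι}
    (hA : ∀ m, ⟪tp (u m) (u' m), A (tp (u m) (u' m))⟫_ℂ = if m = k then 1 else 0) :
    expecT tp u u' c A = ((‖c k‖ ^ 2 : ℝ) : ℂ) := by
  simp [expecT_eq_tsum_of_inner_eq c hA]

lemma expecT_eq_norm_sq_add_norm_sq [DecidableEq ι] {A : HT →L[ℂ] HT} {k l : ι} (hkl : k ≠ l)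
    (hA : ∀ m, ⟪tp (u m) (u' m), A (tp (u m) (u' m))⟫_ℂ =
      (if m = k then 1 else 0) + (if m = l then 1 else 0)) :
    expecT tp u u' c A = ((‖c k‖ ^ 2 + ‖c l‖ ^ 2 : ℝ) : ℂ) := by
  have hsupp : ∀ m ∉ ({k, l} : Finset ι),
      ((‖c m‖ ^ 2 : ℝ) : ℂ) * ((if m = k then 1 else 0) + (if m = l then 1 else 0)) = 0 := by
    intro m hm
    simp_all
  rw [expecT_eq_tsum_of_inner_eq c hA, tsum_eq_sum hsupp, Finset.sum_pair hkl]
  simp [hkl, hkl.symm]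

variable {A B C : HT →L[ℂ] HT}

lemma corrT_eq_zero (hA : expecT tp u u' c A = 0) (hC : expecT tp u u' c C = 0) :
    corrT tp u u' c A B C = 0 := by
  simp [corrT, hA, hC]

lemma corrT_eq_one {p : ℝ} (hp0 : 0 < p) (hp1 : p < 1)
    (hA : expecT tp u u' c A = p) (hB : expecT tp u u' c B = p) (hC : expecT tp u u' c C = p)
    (hAA : expecT tp u u' c (A ∘L A) = p) (hBB : expecT tp u u' c (B ∘L B) = p) :
    corrT tp u u' c A B C = 1 := by
  have hvar : 0 < p - p ^ 2 := by nlinarith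
  rw [corrT, DeltaT, DeltaT, hA, hB, hC, hAA, hBB]
  simp only [Complex.ofReal_re]
  rw [Real.mul_self_sqrt hvar.le, ← sq, div_self hvar.ne']

variable {TOp : (H →L[ℂ] H) → (H' →L[ℂ] H') → (HT →L[ℂ] HT)}

lemma inner_TOp_apply
    (htp : ∀ (x x' : H) (y y' : H'), ⟪tp x y, tp x' y'⟫_ℂ = ⟪x, x'⟫_ℂ * ⟪y, y'⟫_ℂ)
    (hTOp : ∀ (O : H →L[ℂ] H) (O' : H' →L[ℂ] H') (x : H) (y : H'),
      TOp O O' (tp x y) = tp (O x) (O' y))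
    (O : H →L[ℂ] H) (O' : H' →L[ℂ] H') (x : H) (y : H') :
    ⟪tp x y, TOp O O' (tp x y)⟫_ℂ = ⟪x, O x⟫_ℂ * ⟪y, O' y⟫_ℂ := by
  rw [hTOp, htp]

lemma expecT_TOp_comp_TOp
    (hTOp : ∀ (O : H →L[ℂ] H) (O' : H' →L[ℂ] H') (x : H) (y : H'),
      TOp O O' (tp x y) = tp (O x) (O' y))
    (O Q : H →L[ℂ] H) (O' Q' : H' →L[ℂ] H') :
    expecT tp u u' c (TOp O O' ∘L TOp Q Q') = expecT tp u u' c (TOp (O ∘L Q) (O' ∘L Q')) := by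
  simp only [expecT, ContinuousLinearMap.comp_apply, hTOp]

end MixedState

theorem mixed_state_erases_offdiagonal_correlations_general
    {H H' HT : Type*}
    [NormedAddCommGroup H] [InnerProductSpace ℂ H]
    [NormedAddCommGroup H'] [InnerProductSpace ℂ H']
    [NormedAddCommGroup HT] [InnerProductSpace ℂ HT]
    {ι : Type*}
    (B : HilbertBasis ι ℂ H) (B' : HilbertBasis ι ℂ H')
    (tp : H →ₗ[ℂ] H' →ₗ[ℂ] HT)
    (htp : ∀ (x x' : H) (y y' : H'),
      ⟪tp x y, tp x' y'⟫_ℂ = ⟪x, x'⟫_ℂ * ⟪y, y'⟫_ℂ)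
    -- TOp O O' = O ⊗ O'
    (TOp : (H →L[ℂ] H) → (H' →L[ℂ] H') → (HT →L[ℂ] HT))
    (hTOp : ∀ (O : H →L[ℂ] H) (O' : H' →L[ℂ] H') (x : H) (y : H'),
      TOp O O' (tp x y) = tp (O x) (O' y))
    (c : ι → ℂ) :
    (∀ (k l : ι), k ≠ l → ∀ (α β : ℝ),
      expecT tp (⇑B) (⇑B') c
        (TOp (offDiag α (B k) (B l)) (ContinuousLinearMap.id ℂ H')) = 0 ∧
      expecT tp (⇑B) (⇑B') c
        (TOp (ContinuousLinearMap.id ℂ H) (offDiag β (B' k) (B' l))) = 0 ∧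
      expecT tp (⇑B) (⇑B') c
        (TOp ((offDiag α (B k) (B l)).comp (offDiag α (B k) (B l)))
          (ContinuousLinearMap.id ℂ H'))
        = ((‖c k‖ ^ 2 + ‖c l‖ ^ 2 : ℝ) : ℂ) ∧
      expecT tp (⇑B) (⇑B') c
        (TOp (ContinuousLinearMap.id ℂ H)
          ((offDiag β (B' k) (B' l)).comp (offDiag β (B' k) (B' l))))
        = ((‖c k‖ ^ 2 + ‖c l‖ ^ 2 : ℝ) : ℂ) ∧
      expecT tp (⇑B) (⇑B') c
        (TOp (offDiag α (B k) (B l)) (offDiag β (B' k) (B' l))) = 0 ∧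
      (0 < ‖c k‖ ^ 2 + ‖c l‖ ^ 2 →
        corrT tp (⇑B) (⇑B') c
          (TOp (offDiag α (B k) (B l)) (ContinuousLinearMap.id ℂ H'))
          (TOp (ContinuousLinearMap.id ℂ H) (offDiag β (B' k) (B' l)))
          (TOp (offDiag α (B k) (B l)) (offDiag β (B' k) (B' l))) = 0)) ∧
    (∀ k : ι,
      expecT tp (⇑B) (⇑B') c
        (TOp (ketBra (B k) (B k)) (ContinuousLinearMap.id ℂ H'))
        = ((‖c k‖ ^ 2 : ℝ) : ℂ) ∧
      expecT tp (⇑B) (⇑B') c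
        (TOp (ContinuousLinearMap.id ℂ H) (ketBra (B' k) (B' k)))
        = ((‖c k‖ ^ 2 : ℝ) : ℂ) ∧
      expecT tp (⇑B) (⇑B') c
        (TOp (ketBra (B k) (B k)) (ketBra (B' k) (B' k)))
        = ((‖c k‖ ^ 2 : ℝ) : ℂ) ∧
      (0 < ‖c k‖ → ‖c k‖ < 1 →
        corrT tp (⇑B) (⇑B') c
          (TOp (ketBra (B k) (B k)) (ContinuousLinearMap.id ℂ H'))
          (TOp (ContinuousLinearMap.id ℂ H) (ketBra (B' k) (B' k)))
          (TOp (ketBra (B k) (B k)) (ketBra (B' k) (B' k))) = 1)) := by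
  classical
  have hu := B.orthonormal
  have hu' := B'.orthonormal
  have hdiag := inner_TOp_apply htp hTOp
  refine ⟨fun k l hkl α β => ?_, fun k => ?_⟩
  · have hA : expecT tp B B' c (TOp (offDiag α (B k) (B l)) (.id ℂ H')) = 0 :=
      expecT_eq_zero c fun m => by simp [hdiag, hu.inner_offDiag_apply hkl]
    have hC : expecT tp B B' c (TOp (offDiag α (B k) (B l)) (offDiag β (B' k) (B' l))) = 0 :=
      expecT_eq_zero c fun m => by simp [hdiag, hu.inner_offDiag_apply hkl]
    refine ⟨hA, expecT_eq_zero c fun m => by simp [hdiag, hu'.inner_offDiag_apply hkl], ?_, ?_,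
      hC, fun _ => corrT_eq_zero c hA hC⟩
    · exact expecT_eq_norm_sq_add_norm_sq c hkl fun m => by
        simp [hdiag, hu.offDiag_comp_offDiag hkl, hu.inner_ketBra_self_apply, hu'.norm_eq_one]
    · exact expecT_eq_norm_sq_add_norm_sq c hkl fun m => by
        simp [hdiag, hu'.offDiag_comp_offDiag hkl, hu'.inner_ketBra_self_apply, hu.norm_eq_one]
  · have hA : expecT tp B B' c (TOp (ketBra (B k) (B k)) (.id ℂ H')) = ((‖c k‖ ^ 2 : ℝ) : ℂ) :=
      expecT_eq_norm_sq c fun m => by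
        simp [hdiag, hu.inner_ketBra_self_apply, hu'.norm_eq_one]
    have hB : expecT tp B B' c (TOp (.id ℂ H) (ketBra (B' k) (B' k))) = ((‖c k‖ ^ 2 : ℝ) : ℂ) :=
      expecT_eq_norm_sq c fun m => by
        simp [hdiag, hu'.inner_ketBra_self_apply, hu.norm_eq_one]
    have hC : expecT tp B B' c (TOp (ketBra (B k) (B k)) (ketBra (B' k) (B' k))) =
        ((‖c k‖ ^ 2 : ℝ) : ℂ) :=
      expecT_eq_norm_sq c fun m => by
        simp [hdiag, hu.inner_ketBra_self_apply, hu'.inner_ketBra_self_apply]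
    refine ⟨hA, hB, hC, fun h0 h1 => corrT_eq_one c (by positivity)
      (pow_lt_one₀ (norm_nonneg _) h1 two_ne_zero) hA hB hC ?_ ?_⟩
    · rw [expecT_TOp_comp_TOp c hTOp, hu.ketBra_self_comp_ketBra_self,
        ContinuousLinearMap.id_comp, hA]
    · rw [expecT_TOp_comp_TOp c hTOp, hu'.ketBra_self_comp_ketBra_self,
        ContinuousLinearMap.id_comp, hB]

theorem mixed_state_erases_offdiagonal_correlations
    {H H' HT : Type*}
    [NormedAddCommGroup H] [InnerProductSpace ℂ H] [CompleteSpace H]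
    [NormedAddCommGroup H'] [InnerProductSpace ℂ H'] [CompleteSpace H']
    [NormedAddCommGroup HT] [InnerProductSpace ℂ HT] [CompleteSpace HT]
    {ι : Type*} [Countable ι]
    (B : HilbertBasis ι ℂ H) (B' : HilbertBasis ι ℂ H')
    (tp : H →ₗ[ℂ] H' →ₗ[ℂ] HT)
    (htp : ∀ (x x' : H) (y y' : H'),
      ⟪tp x y, tp x' y'⟫_ℂ = ⟪x, x'⟫_ℂ * ⟪y, y'⟫_ℂ)
    (hdense : Dense ((Submodule.span ℂ
      (Set.range fun p : H × H' => tp p.1 p.2) : Submodule ℂ HT) : Set HT))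
    -- TOp O O' = O ⊗ O'
    (TOp : (H →L[ℂ] H) → (H' →L[ℂ] H') → (HT →L[ℂ] HT))
    (hTOp : ∀ (O : H →L[ℂ] H) (O' : H' →L[ℂ] H') (x : H) (y : H'),
      TOp O O' (tp x y) = tp (O x) (O' y))
    (c : ι → ℂ) (hc : HasSum (fun k => ‖c k‖ ^ 2) 1) :
    (∀ (k l : ι), k ≠ l → ∀ (α β : ℝ),
      expecT tp (⇑B) (⇑B') c
        (TOp (offDiag α (B k) (B l)) (ContinuousLinearMap.id ℂ H')) = 0 ∧
      expecT tp (⇑B) (⇑B') c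
        (TOp (ContinuousLinearMap.id ℂ H) (offDiag β (B' k) (B' l))) = 0 ∧
      expecT tp (⇑B) (⇑B') c
        (TOp ((offDiag α (B k) (B l)).comp (offDiag α (B k) (B l)))
          (ContinuousLinearMap.id ℂ H'))
        = ((‖c k‖ ^ 2 + ‖c l‖ ^ 2 : ℝ) : ℂ) ∧
      expecT tp (⇑B) (⇑B') c
        (TOp (ContinuousLinearMap.id ℂ H)
          ((offDiag β (B' k) (B' l)).comp (offDiag β (B' k) (B' l))))
        = ((‖c k‖ ^ 2 + ‖c l‖ ^ 2 : ℝ) : ℂ) ∧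
      expecT tp (⇑B) (⇑B') c
        (TOp (offDiag α (B k) (B l)) (offDiag β (B' k) (B' l))) = 0 ∧
      (0 < ‖c k‖ ^ 2 + ‖c l‖ ^ 2 →
        corrT tp (⇑B) (⇑B') c
          (TOp (offDiag α (B k) (B l)) (ContinuousLinearMap.id ℂ H'))
          (TOp (ContinuousLinearMap.id ℂ H) (offDiag β (B' k) (B' l)))
          (TOp (offDiag α (B k) (B l)) (offDiag β (B' k) (B' l))) = 0)) ∧
    (∀ k : ι,
      expecT tp (⇑B) (⇑B') c
        (TOp (ketBra (B k) (B k)) (ContinuousLinearMap.id ℂ H'))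
        = ((‖c k‖ ^ 2 : ℝ) : ℂ) ∧
      expecT tp (⇑B) (⇑B') c
        (TOp (ContinuousLinearMap.id ℂ H) (ketBra (B' k) (B' k)))
        = ((‖c k‖ ^ 2 : ℝ) : ℂ) ∧
      expecT tp (⇑B) (⇑B') c
        (TOp (ketBra (B k) (B k)) (ketBra (B' k) (B' k)))
        = ((‖c k‖ ^ 2 : ℝ) : ℂ) ∧
      (0 < ‖c k‖ → ‖c k‖ < 1 →
        corrT tp (⇑B) (⇑B') c
          (TOp (ketBra (B k) (B k)) (ContinuousLinearMap.id ℂ H'))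
          (TOp (ContinuousLinearMap.id ℂ H) (ketBra (B' k) (B' k)))
          (TOp (ketBra (B k) (B k)) (ketBra (B' k) (B' k))) = 1)) :=
  mixed_state_erases_offdiagonal_correlations_general B B' tp htp TOp hTOp c
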